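/- arXiv:1808.01156 — 7 statements merged into one kernel-verified Lean document; each statement's English description precedes it below -/
import Mathlib

section
/- For every positive integer n, the sum over k from 0 to n of (1/(2k-1)) * C(2n-2k, n-k) * C(2k, k) equals 0, where C denotes binomial coefficients. -/
/-!
For `k ≥ 1` the weight `C(2k, k) / (2k - 1)` equals `2 Cat(k - 1)`, so after splitting off the
term `k = 0`, which is `-C(2n, n)`, the claim becomes the convolution identity
`2 ∑_{i + j = m} Cat(i) C(2j, j) = C(2m + 2, m + 1)` with `n = m + 1`.
Symmetrising that sum and using `(j + 1) Cat(j) = C(2j, j)` turns it into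
`(m + 2) ∑_{i + j = m} Cat(i) Cat(j) = (m + 2) Cat(m + 1) = C(2m + 2, m + 1)`.
-/

open Finset

namespace Nat

theorem centralBinom_succ_eq_two_mul_catalan (n : ℕ) :
    centralBinom (n + 1) = 2 * (2 * n + 1) * catalan n := by
  apply Nat.eq_of_mul_eq_mul_left (Nat.add_one_pos n)
  rw [succ_mul_centralBinom_succ, ← succ_mul_catalan_eq_centralBinom]
  ring

theorem two_mul_sum_antidiagonal_catalan_mul_centralBinom (n : ℕ) :
    2 * ∑ ij ∈ antidiagonal n, catalan ij.1 * centralBinom ij.2 = centralBinom (n + 1) := by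
  rw [← succ_mul_catalan_eq_centralBinom (n + 1), catalan_succ', two_mul, mul_sum]
  nth_rewrite 2 [← Finset.Nat.sum_antidiagonal_swap]
  rw [← sum_add_distrib]
  refine sum_congr rfl fun ij hij => ?_
  rw [HasAntidiagonal.mem_antidiagonal] at hij
  simp only [Prod.fst_swap, Prod.snd_swap, ← succ_mul_catalan_eq_centralBinom]
  rw [← hij]
  ring

theorem two_mul_sum_range_catalan_mul_centralBinom (n : ℕ) :
    2 * ∑ k ∈ range (n + 1), catalan k * centralBinom (n - k) = centralBinom (n + 1) := by
  rw [← Finset.Nat.sum_antidiagonal_eq_sum_range_succ_mk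
    (fun ij => catalan ij.1 * centralBinom ij.2), two_mul_sum_antidiagonal_catalan_mul_centralBinom]

theorem choose_two_mul_sub_two_mul (n k : ℕ) :
    (2 * n - 2 * k).choose (n - k) = centralBinom (n - k) := by
  rw [← Nat.mul_sub, centralBinom_eq_two_mul_choose]

end Nat

theorem centralBinom_succ_div_two_mul_sub_one {K : Type*} [Field K] [CharZero K] (k : ℕ) :
    (Nat.centralBinom (k + 1) : K) / (2 * ((k + 1 : ℕ) : K) - 1) = 2 * catalan k := by
  have hden : 2 * ((k + 1 : ℕ) : K) - 1 = ((2 * k + 1 : ℕ) : K) := by push_cast; ring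
  rw [hden, Nat.centralBinom_succ_eq_two_mul_catalan,
    div_eq_iff (Nat.cast_ne_zero.2 (2 * k).succ_ne_zero)]
  push_cast
  ring

theorem stmt0 (n : ℕ) (hn : 0 < n) :
    ∑ k ∈ Finset.range (n + 1),
      (1 / (2 * (k : ℚ) - 1)) * (Nat.choose (2 * n - 2 * k) (n - k) : ℚ) *
        (Nat.choose (2 * k) k : ℚ) = 0 := by
  obtain ⟨m, rfl⟩ := Nat.exists_eq_add_one_of_ne_zero hn.ne'
  have hconv : (2 : ℚ) * ∑ k ∈ range (m + 1), (catalan k : ℚ) * Nat.centralBinom (m - k)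
      = Nat.centralBinom (m + 1) := by
    exact_mod_cast Nat.two_mul_sum_range_catalan_mul_centralBinom m
  simp only [Nat.choose_two_mul_sub_two_mul, ← Nat.centralBinom_eq_two_mul_choose]
  have hterm : ∀ k ∈ range (m + 1), 1 / (2 * ((k + 1 : ℕ) : ℚ) - 1) *
      (Nat.centralBinom (m + 1 - (k + 1)) : ℚ) * Nat.centralBinom (k + 1)
        = 2 * (catalan k * Nat.centralBinom (m - k)) := fun k _ => by
    rw [Nat.add_sub_add_right, mul_right_comm, one_div_mul_eq_div,
      centralBinom_succ_div_two_mul_sub_one]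
    ring
  rw [sum_range_succ', sum_congr rfl hterm, ← mul_sum, hconv]
  norm_num
end

section
/- For every positive integer n and all real numbers y, z such that the binomial coefficients C(y,k) are nonzero for 0 ≤ k ≤ n, the identity ∑_{k=0}^n (-1)^k C(n,k) C(z,k) / C(y,k) = C(y-z, n) / C(y, n) holds, where C(x,k) denotes the generalized binomial coefficient x(x-1)...(x-k+1)/k!. -/
/-!
After cancelling the factorials the summand is `(-1)^k C(n,k) (z)_k / (y)_k` with falling
factorials `(x)_k`. Pascal's rule together with `(x)_{k+1} = x (x-1)_k` gives the recursion
`S_{n+1}(y, z) = S_n(y, z) - (z / y) S_n(y - 1, z - 1)`, which `(y - z)_n / (y)_n` satisfies too,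
so induction on `n` with `y` and `z` generalized proves the identity over any field.
-/

/-- Generalized binomial coefficient `x(x-1)⋯(x-k+1)/k!` for real `x`. -/
noncomputable def rchoose (x : ℝ) (k : ℕ) : ℝ :=
  (∏ i ∈ Finset.range k, (x - i)) / Nat.factorial k

open Finset Polynomial

lemma descPochhammer_succ_eval_left {R : Type*} [CommRing R] (n : ℕ) (r : R) :
    (descPochhammer R (n + 1)).eval r = r * (descPochhammer R n).eval (r - 1) := by
  simp [descPochhammer_succ_left, eval_comp]

lemma sum_range_succ_choose_mul {R : Type*} [Semiring R] (n : ℕ) (f : ℕ → R) :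
    ∑ k ∈ range (n + 2), ((n + 1).choose k : R) * f k
      = ∑ k ∈ range (n + 1), (n.choose k : R) * (f k + f (k + 1)) := by
  have hlow : ∑ k ∈ range (n + 1), (n.choose (k + 1) : R) * f (k + 1) + (n.choose 0 : R) * f 0
      = ∑ k ∈ range (n + 1), (n.choose k : R) * f k := by
    rw [← sum_range_succ' (fun k => (n.choose k : R) * f k), sum_range_succ, Nat.choose_succ_self,
      Nat.cast_zero, zero_mul, add_zero]
  simp only [sum_range_succ' _ (n + 1), Nat.choose_succ_succ', Nat.cast_add, add_mul, mul_add,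
    sum_add_distrib, Nat.choose_zero_right, ← hlow]
  abel

theorem sum_alternating_choose_mul_descPochhammer_div {K : Type*} [Field K] (n : ℕ) (y z : K)
    (hy : (descPochhammer K n).eval y ≠ 0) :
    ∑ k ∈ range (n + 1), (-1) ^ k * (n.choose k : K) * (descPochhammer K k).eval z
        / (descPochhammer K k).eval y
      = (descPochhammer K n).eval (y - z) / (descPochhammer K n).eval y := by
  induction n generalizing y z with
  | zero => simp
  | succ n ih =>
    obtain ⟨hyn, hyn'⟩ := mul_ne_zero_iff.mp (descPochhammer_succ_eval n y ▸ hy)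
    obtain ⟨hy₀, hy₁⟩ := mul_ne_zero_iff.mp (descPochhammer_succ_eval_left n y ▸ hy)
    have hshift (k : ℕ) : (-1) ^ (k + 1) * (descPochhammer K (k + 1)).eval z
        / (descPochhammer K (k + 1)).eval y
        = -(z / y) * ((-1) ^ k * (descPochhammer K k).eval (z - 1)
          / (descPochhammer K k).eval (y - 1)) := by
      rw [descPochhammer_succ_eval_left, descPochhammer_succ_eval_left]
      field_simp
      ring
    calc ∑ k ∈ range (n + 2), (-1) ^ k * ((n + 1).choose k : K) * (descPochhammer K k).eval z
          / (descPochhammer K k).eval y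
        = ∑ k ∈ range (n + 1), (-1) ^ k * (n.choose k : K) * (descPochhammer K k).eval z
            / (descPochhammer K k).eval y
          - z / y * ∑ k ∈ range (n + 1), (-1) ^ k * (n.choose k : K)
            * (descPochhammer K k).eval (z - 1) / (descPochhammer K k).eval (y - 1) := by
          simp only [mul_assoc, mul_div_assoc, mul_left_comm _ (n.choose _ : K),
            mul_left_comm _ ((n + 1).choose _ : K), sum_range_succ_choose_mul]
          simp only [← mul_div_assoc, hshift, mul_sum, ← sum_sub_distrib]
          refine sum_congr rfl fun k _ => by ring
      _ = (descPochhammer K n).eval (y - z) / (descPochhammer K n).eval y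
          - z / y * ((descPochhammer K n).eval (y - z) / (descPochhammer K n).eval (y - 1)) := by
          rw [ih y z hyn, ih (y - 1) (z - 1) hy₁, sub_sub_sub_cancel_right]
      _ = (descPochhammer K (n + 1)).eval (y - z) / (descPochhammer K (n + 1)).eval y := by
          have hrel := (descPochhammer_succ_eval_left n y).symm.trans (descPochhammer_succ_eval n y)
          rw [descPochhammer_succ_eval n (y - z), descPochhammer_succ_eval n y]
          field_simp
          linear_combination (descPochhammer K n).eval (y - z) * z * hrel

lemma rchoose_eq_descPochhammer_eval_div (x : ℝ) (k : ℕ) :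
    rchoose x k = (descPochhammer ℝ k).eval x / k.factorial := by
  rw [rchoose, descPochhammer_eval_eq_prod_range]

lemma rchoose_div_rchoose (x y : ℝ) (k : ℕ) :
    rchoose x k / rchoose y k = (descPochhammer ℝ k).eval x / (descPochhammer ℝ k).eval y := by
  simp only [rchoose_eq_descPochhammer_eval_div]
  exact div_div_div_cancel_right₀ (Nat.cast_ne_zero.mpr k.factorial_ne_zero) _ _

theorem stmt1_general (n : ℕ) (y z : ℝ)
    (hy : ∀ k ≤ n, rchoose y k ≠ 0) :
    ∑ k ∈ Finset.range (n + 1),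
      (-1 : ℝ) ^ k * (Nat.choose n k : ℝ) * rchoose z k / rchoose y k
      = rchoose (y - z) n / rchoose y n := by
  have hyn : (descPochhammer ℝ n).eval y ≠ 0 :=
    (div_ne_zero_iff.mp (rchoose_eq_descPochhammer_eval_div y n ▸ hy n le_rfl)).1
  simp only [mul_div_assoc, rchoose_div_rchoose]
  simpa only [mul_div_assoc] using sum_alternating_choose_mul_descPochhammer_div n y z hyn

theorem stmt1 (n : ℕ) (hn : 0 < n) (y z : ℝ)
    (hy : ∀ k ≤ n, rchoose y k ≠ 0) :
    ∑ k ∈ Finset.range (n + 1),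
      (-1 : ℝ) ^ k * (Nat.choose n k : ℝ) * rchoose z k / rchoose y k
      = rchoose (y - z) n / rchoose y n :=
  stmt1_general n y z hy
end

section
/- For every positive integer n, the alternating sum ∑_{k=0}^n (-1)^k C(n,k) C(n+k, k+1) equals 0. -/
/-!
As a function of `k`, `C(n+k, k+1) = C(k+n, n-1)` is a shifted binomial polynomial of degree
`n - 1`, and the alternating sum is, up to the sign `(-1)^n`, its `n`-th forward difference at
`0`. Since `Δ` lowers `x ↦ C(x, j+1)` to `x ↦ C(x, j)`, that difference vanishes.
-/

open Finset

theorem sum_range_neg_one_pow_mul_choose_smul_eq_fwdDiff_iter {G : Type*} [AddCommGroup G]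
    (f : ℕ → G) (n : ℕ) :
    ∑ k ∈ range (n + 1), ((-1 : ℤ) ^ k * n.choose k) • f k =
      (-1 : ℤ) ^ n • (fwdDiff 1)^[n] f 0 := by
  rw [fwdDiff_iter_eq_sum_shift, smul_sum]
  refine sum_congr rfl fun k hk => ?_
  obtain ⟨j, rfl⟩ := Nat.exists_eq_add_of_le (Nat.lt_succ_iff.mp (mem_range.mp hk))
  have hsign : (-1 : ℤ) ^ (k + j) * (-1) ^ j = (-1) ^ k := by
    rw [pow_add, mul_assoc, ← pow_add, Even.neg_one_pow ⟨j, rfl⟩, mul_one]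
  rw [smul_smul, Nat.add_sub_cancel_left, zero_add, nsmul_one, Nat.cast_id, ← mul_assoc, hsign]

theorem fwdDiff_iter_choose_eq_zero_of_lt {m n : ℕ} (h : m < n) :
    (fwdDiff 1)^[n] (fun x ↦ x.choose m : ℕ → ℤ) = 0 := by
  obtain ⟨k, rfl⟩ := Nat.exists_eq_add_of_lt h
  have h_m := fwdDiff_iter_choose 0 m
  rw [add_zero] at h_m
  rw [show m + k + 1 = k + 1 + m by ring, Function.iterate_add_apply, h_m]
  simp only [Nat.choose_zero_right, Nat.cast_one, Function.iterate_succ_apply, fwdDiff_const]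
  exact Function.iterate_fixed (fwdDiff_const 1 (0 : ℤ)) k

theorem alternating_sum_range_choose_mul_choose_add_eq_zero {m n : ℕ} (a : ℕ) (h : m < n) :
    ∑ k ∈ range (n + 1), (-1 : ℤ) ^ k * n.choose k * (k + a).choose m = 0 := by
  have hdiff := sum_range_neg_one_pow_mul_choose_smul_eq_fwdDiff_iter
    (fun k ↦ ((k + a).choose m : ℤ)) n
  rw [fwdDiff_iter_comp_add 1 (fun x ↦ (x.choose m : ℤ)) a n 0,
    fwdDiff_iter_choose_eq_zero_of_lt h, Pi.zero_apply, smul_zero] at hdiff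
  simpa only [smul_eq_mul] using hdiff

theorem stmt2 (n : ℕ) (hn : 0 < n) :
    ∑ k ∈ Finset.range (n + 1),
      (-1 : ℤ) ^ k * (Nat.choose n k : ℤ) * (Nat.choose (n + k) (k + 1) : ℤ) = 0 := by
  have hsymm (k : ℕ) : (n + k).choose (k + 1) = (k + n).choose (n - 1) := by
    rw [add_comm]
    exact Nat.choose_symm_of_eq_add (by omega)
  simp only [hsymm]
  exact alternating_sum_range_choose_mul_choose_add_eq_zero n (Nat.sub_lt hn one_pos)
end

section
/- For every positive integer n, the alternating sum ∑_{k=0}^n (-1)^k C(n+k, k) C(n+1, k+1) equals 0. -/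
/-!
The sum telescopes: with `n = p + 1`, its partial sum up to `k = m` is
`(-1)^m * C(p+m+2, m+1) * C(p, m)`, and this closed form vanishes at `m = p + 1`.
-/

namespace Nat

theorem succ_mul_choose_succ_add_mul_choose (n k : ℕ) :
    (k + 1) * n.choose (k + 1) + k * n.choose k = n * n.choose k := by
  rw [mul_comm, choose_succ_right_eq]
  rcases le_or_gt k n with h | h
  · rw [mul_comm k, ← mul_add, Nat.sub_add_cancel h, mul_comm]
  · simp [choose_eq_zero_of_lt h]

theorem add_two_mul_choose_add_two (p m : ℕ) :
    (m + 2) * (p + 2).choose (m + 2) = (p + m + 3) * p.choose (m + 1) + (m + 2) * p.choose m := by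
  have h := succ_mul_choose_succ_add_mul_choose p (m + 1)
  rw [choose_succ_succ', choose_succ_succ', choose_succ_succ']
  zify at h ⊢
  linear_combination h

theorem choose_mul_choose_add_choose_mul_choose (p m : ℕ) :
    (p + m + 3).choose (m + 2) * p.choose (m + 1) + (p + m + 2).choose (m + 1) * p.choose m
      = (p + m + 2).choose (m + 1) * (p + 2).choose (m + 2) := by
  -- after multiplying by `m + 2`, both sides carry the common factor `C(p+m+2, m+1)`
  apply Nat.eq_of_mul_eq_mul_right (show 0 < m + 2 by omega)
  have hpascal : (p + m + 3) * (p + m + 2).choose (m + 1) = (p + m + 3).choose (m + 2) * (m + 2) :=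
    add_one_mul_choose_eq (p + m + 2) (m + 1)
  have hstep := add_two_mul_choose_add_two p m
  zify at hpascal hstep ⊢
  linear_combination -(p.choose (m + 1) : ℤ) * hpascal - ((p + m + 2).choose (m + 1) : ℤ) * hstep

end Nat

theorem sum_range_neg_one_pow_mul_choose_mul_choose (p m : ℕ) :
    ∑ k ∈ Finset.range (m + 1),
      (-1 : ℤ) ^ k * ((p + 1 + k).choose k : ℤ) * ((p + 2).choose (k + 1) : ℤ)
      = (-1 : ℤ) ^ m * ((p + m + 2).choose (m + 1) : ℤ) * (p.choose m : ℤ) := by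
  induction m with
  | zero => simp
  | succ m ih =>
    have hstep := Nat.choose_mul_choose_add_choose_mul_choose p m
    rw [Finset.sum_range_succ, ih, show p + 1 + (m + 1) = p + m + 2 by ring,
      show p + (m + 1) + 2 = p + m + 3 by ring]
    zify at hstep
    linear_combination (-1 : ℤ) ^ m * hstep

theorem stmt3 (n : ℕ) (hn : 0 < n) :
    ∑ k ∈ Finset.range (n + 1),
      (-1 : ℤ) ^ k * (Nat.choose (n + k) k : ℤ) * (Nat.choose (n + 1) (k + 1) : ℤ) = 0 := by
  obtain ⟨p, rfl⟩ : ∃ p, n = p + 1 := ⟨n - 1, by omega⟩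
  rw [sum_range_neg_one_pow_mul_choose_mul_choose p (p + 1),
    Nat.choose_eq_zero_of_lt (Nat.lt_succ_self p)]
  simp
end

section
/- Let S_0 = 1 and for n ≥ 1 define S_n : [0,1]^n → ℝ recursively by S_n(u) = ∑_{i=1}^n (-1)^{i+n} u_i^{n-i+1}/(n-i+1)! · S_{i-1}(u_1,...,u_{i-1}). Then for every n ≥ 1 and every u_{n+1} ∈ [0,1], the iterated integral ∫_0^{u_{n+1}} ··· ∫_0^{u_2} S_n(u_1,...,u_n) du_1 ··· du_n equals u_{n+1}^{2n} / (n! (n+1)!). -/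
open intervalIntegral

/-- The recursively defined functions `S_n` from the paper:
`S_0 = 1` and `S_n(u) = ∑_{i=1}^n (-1)^{i+n} u_i^{n-i+1}/(n-i+1)! · S_{i-1}(u_1,…,u_{i-1})`. -/
noncomputable def S : ∀ n : ℕ, (Fin n → ℝ) → ℝ
  | 0, _ => 1
  | (n + 1), u => ∑ i : Fin (n + 1),
      (-1 : ℝ) ^ ((i : ℕ) + n) * u i ^ (n + 1 - (i : ℕ)) /
          (Nat.factorial (n + 1 - (i : ℕ)))
        * S i (fun j => u (Fin.castLE i.isLt.le j))

/-- `iterInt n f t` is the iterated integral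
`∫_0^t ∫_0^{u_n} ⋯ ∫_0^{u_2} f(u_1,…,u_n) du_1 ⋯ du_n`. -/
noncomputable def iterInt : ∀ n : ℕ, ((Fin n → ℝ) → ℝ) → ℝ → ℝ
  | 0, f, _ => f (fun i => i.elim0)
  | (n + 1), f, t => ∫ x in (0 : ℝ)..t, iterInt n (fun u => f (Fin.snoc u x)) x

/-!
Raising every exponent in the defining sum of `S (n + 1)` by `m`, together with its factorial,
gives a family `shiftedS n m` with `shiftedS n 0 = S (n + 1)`. Splitting off the last summand
shows that, with the last variable frozen at `x`, `shiftedS (n + 1) m` is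
`x ^ (m + 1) / (m + 1)! * S (n + 1) - shiftedS n (m + 1)`. As the iterated integral is linear on
continuous integrands, induction on `n` gives
`iterInt (n + 1) (shiftedS n k) t = c n k * t ^ (2 * n + 2 + k)`, where the constants
`c n k = (n + k)! / (n! k! (n + 1)! (n + k + 2)!)` are those solving the recurrence
`(2 * n + 4 + k) * c (n + 1) k = c n 0 / (k + 1)! - c n (k + 1)`; the case `k = 0` is the theorem.
-/

open scoped Nat

theorem Fin.snoc_castLE {α : Type*} {n k : ℕ} (u : Fin (n + 1) → α) (x : α) (h : k ≤ n + 2)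
    (hk : k ≤ n + 1) (j : Fin k) :
    (Fin.snoc u x : Fin (n + 2) → α) (Fin.castLE h j) = u (Fin.castLE hk j) :=
  Fin.snoc_castSucc (α := fun _ => α) x u (Fin.castLE hk j)

theorem continuous_iterInt {X : Type*} [TopologicalSpace X] {n : ℕ}
    {F : X → (Fin n → ℝ) → ℝ} (hF : Continuous F.uncurry) :
    Continuous fun p : X × ℝ => iterInt n (F p.1) p.2 := by
  induction n generalizing X with
  | zero => exact hF.comp (by fun_prop : Continuous fun p : X × ℝ => (p.1, fun i => i.elim0))
  | succ n ih =>
    have hInner := ih (F := fun (q : X × ℝ) u => F q.1 (Fin.snoc u q.2))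
      (hF.comp (f := fun p : (X × ℝ) × (Fin n → ℝ) =>
        (p.1.1, (Fin.snoc p.2 p.1.2 : Fin (n + 1) → ℝ))) (by fun_prop))
    exact continuous_parametric_primitive_of_continuous
      (f := fun p x => iterInt n (fun u => F p (Fin.snoc u x)) x)
      (hInner.comp (by fun_prop : Continuous fun q : X × ℝ => ((q.1, q.2), q.2)))

theorem continuous_iterInt_snoc {n : ℕ} {f : (Fin (n + 1) → ℝ) → ℝ} (hf : Continuous f) :
    Continuous fun x => iterInt n (fun u => f (Fin.snoc u x)) x :=
  (continuous_iterInt (F := fun x u => f (Fin.snoc u x))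
    (hf.comp (f := fun p : ℝ × (Fin n → ℝ) => (Fin.snoc p.2 p.1 : Fin (n + 1) → ℝ))
      (by fun_prop))).comp
    (continuous_id.prodMk continuous_id)

theorem iterInt_const_mul (n : ℕ) (a : ℝ) (f : (Fin n → ℝ) → ℝ) (t : ℝ) :
    iterInt n (fun u => a * f u) t = a * iterInt n f t := by
  induction n generalizing t with
  | zero => rfl
  | succ n ih => simp only [iterInt, ih, intervalIntegral.integral_const_mul]

theorem iterInt_sub {n : ℕ} {f g : (Fin n → ℝ) → ℝ} (hf : Continuous f)
    (hg : Continuous g) (t : ℝ) :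
    iterInt n (fun u => f u - g u) t = iterInt n f t - iterInt n g t := by
  induction n generalizing t with
  | zero => rfl
  | succ n ih =>
    simp only [iterInt]
    rw [← intervalIntegral.integral_sub ((continuous_iterInt_snoc hf).intervalIntegrable _ _)
      ((continuous_iterInt_snoc hg).intervalIntegrable _ _)]
    exact intervalIntegral.integral_congr fun x _ =>
      ih (hf.comp (by fun_prop)) (hg.comp (by fun_prop)) x

theorem continuous_S (n : ℕ) : Continuous (S n) := by
  induction n using Nat.strong_induction_on with
  | _ n ih =>
    cases n with
    | zero => rw [show S 0 = fun _ => 1 from funext S.eq_1]; exact continuous_const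
    | succ n =>
      have hS : ∀ i : Fin (n + 1),
          Continuous fun u : Fin (n + 1) → ℝ => S i (fun j => u (Fin.castLE i.isLt.le j)) :=
        fun i => (ih i i.isLt).comp (by fun_prop)
      rw [show S (n + 1) = _ from funext (S.eq_2 n)]
      fun_prop

noncomputable def shiftedS (n m : ℕ) (u : Fin (n + 1) → ℝ) : ℝ :=
  ∑ i : Fin (n + 1),
      (-1 : ℝ) ^ ((i : ℕ) + n) * u i ^ (n + 1 - (i : ℕ) + m) /
          (n + 1 - (i : ℕ) + m)! * S i (fun j => u (Fin.castLE i.isLt.le j))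

theorem S_succ (n : ℕ) : S (n + 1) = shiftedS n 0 := by
  funext u
  simp only [S, shiftedS, add_zero]

theorem continuous_shiftedS (n m : ℕ) : Continuous (shiftedS n m) := by
  have hS : ∀ i : Fin (n + 1),
      Continuous fun u : Fin (n + 1) → ℝ => S i (fun j => u (Fin.castLE i.isLt.le j)) :=
    fun i => (continuous_S i).comp (by fun_prop)
  unfold shiftedS
  fun_prop

theorem shiftedS_zero (m : ℕ) (u : Fin 1 → ℝ) :
    shiftedS 0 m u = u 0 ^ (m + 1) / (m + 1)! := by
  simp [shiftedS, S, add_comm 1 m]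

theorem shiftedS_succ_snoc (n m : ℕ) (u : Fin (n + 1) → ℝ) (x : ℝ) :
    shiftedS (n + 1) m (Fin.snoc u x)
      = x ^ (m + 1) / (m + 1)! * S (n + 1) u - shiftedS n (m + 1) u := by
  rw [shiftedS, Fin.sum_univ_castSucc, shiftedS, sub_eq_neg_add, ← Finset.sum_neg_distrib]
  congr 1
  · refine Finset.sum_congr rfl fun i _ => ?_
    have hsign : (-1 : ℝ) ^ ((i : ℕ) + (n + 1)) = -(-1) ^ ((i : ℕ) + n) := by
      rw [← add_assoc, pow_succ, mul_neg_one]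
    have hexp : n + 1 + 1 - (i : ℕ) + m = n + 1 - (i : ℕ) + (m + 1) := by omega
    simp only [Fin.val_castSucc, Fin.snoc_castSucc, hsign, hexp, Fin.snoc_castLE u x _ i.isLt.le]
    ring
  · have hsign : (-1 : ℝ) ^ (n + 1 + (n + 1)) = 1 := by
      rw [← two_mul, pow_mul, neg_one_sq, one_pow]
    simp only [Fin.val_last, Fin.snoc_last, hsign, Nat.add_sub_cancel_left,
      Fin.snoc_castLE u x _ le_rfl, Fin.castLE_rfl, add_comm 1 m, one_mul]
    rfl

noncomputable def shiftedSCoeff (n k : ℕ) : ℝ :=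
  (n + k)! / (n ! * k ! * (n + 1)! * (n + k + 2)!)

theorem shiftedSCoeff_zero_div_sub (n k : ℕ) :
    shiftedSCoeff n 0 / (k + 1)! - shiftedSCoeff n (k + 1)
      = (2 * n + 4 + k) * shiftedSCoeff (n + 1) k := by
  rw [shiftedSCoeff, shiftedSCoeff, shiftedSCoeff, ← add_assoc, add_right_comm n 1 k, add_zero]
  push_cast [Nat.factorial_succ, Nat.factorial_zero]
  field_simp
  ring

theorem iterInt_shiftedS (n k : ℕ) (t : ℝ) :
    iterInt (n + 1) (shiftedS n k) t = shiftedSCoeff n k * t ^ (2 * n + 2 + k) := by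
  induction n generalizing k t with
  | zero =>
    calc iterInt 1 (shiftedS 0 k) t = ∫ x in (0 : ℝ)..t, x ^ (k + 1) / (k + 1)! := by
          simp only [iterInt, shiftedS_zero]
          rfl
      _ = shiftedSCoeff 0 k * t ^ (2 * 0 + 2 + k) := by
          rw [intervalIntegral.integral_div, integral_pow, shiftedSCoeff,
            zero_pow (Nat.succ_ne_zero _), sub_zero, zero_add]
          push_cast [Nat.factorial_succ, Nat.factorial_zero]
          field_simp
          ring
  | succ n ih =>
    calc iterInt (n + 2) (shiftedS (n + 1) k) t
        = ∫ x in (0 : ℝ)..t, iterInt (n + 1)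
            (fun u => x ^ (k + 1) / (k + 1)! * shiftedS n 0 u - shiftedS n (k + 1) u) x := by
          simp only [iterInt, shiftedS_succ_snoc, S_succ]
      _ = ∫ x in (0 : ℝ)..t,
            (2 * n + 4 + k) * shiftedSCoeff (n + 1) k * x ^ (2 * n + 3 + k) := by
          refine intervalIntegral.integral_congr fun x _ => ?_
          rw [iterInt_sub ((continuous_shiftedS n 0).const_mul _) (continuous_shiftedS n (k + 1)),
            iterInt_const_mul, ih, ih, ← shiftedSCoeff_zero_div_sub]
          ring
      _ = shiftedSCoeff (n + 1) k * t ^ (2 * (n + 1) + 2 + k) := by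
          rw [intervalIntegral.integral_const_mul, integral_pow, zero_pow (Nat.succ_ne_zero _),
            sub_zero, show 2 * (n + 1) + 2 + k = 2 * n + 3 + k + 1 by ring]
          push_cast
          field_simp
          ring

theorem stmt4_general (n : ℕ) (t : ℝ) :
    iterInt n (S n) t = t ^ (2 * n) / (Nat.factorial n * Nat.factorial (n + 1)) := by
  cases n with
  | zero => simp [iterInt, S]
  | succ n =>
    rw [S_succ, iterInt_shiftedS, shiftedSCoeff, add_zero, add_zero, Nat.factorial_zero,
      Nat.cast_one, mul_one, show 2 * n + 2 = 2 * (n + 1) by ring]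
    field_simp

theorem stmt4 (n : ℕ) (hn : 1 ≤ n) (t : ℝ) (ht : t ∈ Set.Icc (0 : ℝ) 1) :
    iterInt n (S n) t = t ^ (2 * n) / (Nat.factorial n * Nat.factorial (n + 1)) :=
  stmt4_general n t
end

section
/- Let S_n be the recursively defined functions S_0 = 1, S_n(u) = ∑_{i=1}^n (-1)^{i+n} u_i^{n-i+1}/(n-i+1)! · S_{i-1}(u_1,...,u_{i-1}), and for m ∈ {1,...,n} set S_{n,m}(u) := S_n(u_1,...,u_{n-m},1,...,1). Then the iterated integral ∫_0^1 ∫_0^{u_n} ··· ∫_0^{u_2} S_{n,m}(u) du_1···du_n equals 1/(n!(n+1)!) + (1/(2n)!) ∑_{k=1}^m ((2n-2k)! / ((n-k)!(n+1-k)!)) · C(2k-1, k). -/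
open intervalIntegral

/-- `S_{n,m}(u) = S_n(u_1,…,u_{n-m},1,…,1)`: the last `m` arguments are set to `1`. -/
noncomputable def Snm (n m : ℕ) (u : Fin n → ℝ) : ℝ :=
  S n (fun i => if (i : ℕ) < n - m then u i else 1)

/-!
`S_n` is a polynomial, and the iterated integral over `0 ≤ u_1 ≤ ⋯ ≤ u_n ≤ t` of a polynomial is
computed monomial by monomial; in particular it is linear. Integrating the recursion for `S_n`
term by term and using `∑_i (-1)^i C(N+i, 2i) Cat_i = 0` (for `N ≥ 1`) gives
`∫ S_p = t^{2p}/(p!(p+1)!)`. With the trailing arguments set to `1`, the same recursion gives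
`∫ S_{p+q}(u,1,…,1) = ∑_r (-1)^r d_r t^{2p+r}/(q-r)!` for explicit alternating sums `d_r` of these
Catalan weights, the recursive tail being undone by binomial inversion. The last `m` integration
variables of `S_{n,m}` are dummies, turning `t^e` into `e!/(e+m)!`, and the resulting double sum
is evaluated by the alternating Chu–Vandermonde identity.
-/

open Finset MvPolynomial
open scoped Nat

lemma neg_one_pow_eq_of_mod_two_eq {R : Type*} [Ring R] {a b : ℕ} (h : a % 2 = b % 2) :
    (-1 : R) ^ a = (-1) ^ b := by
  rw [neg_one_pow_eq_pow_mod_two, h, ← neg_one_pow_eq_pow_mod_two]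

lemma alternating_vandermonde (L K c : ℕ) :
    ∑ a ∈ range (c + 1), (-1 : ℤ) ^ a * (L + a).choose a * (L + 1 + K).choose (c - a) =
      K.choose c := by
  have h := Ring.add_choose_eq (r := -((L + 1 : ℕ) : ℤ)) (s := ((L + 1 + K : ℕ) : ℤ)) c
    (Commute.all _ _)
  rw [show -((L + 1 : ℕ) : ℤ) + ((L + 1 + K : ℕ) : ℤ) = K by push_cast; ring,
    Ring.choose_natCast, Nat.sum_antidiagonal_eq_sum_range_succ_mk] at h
  rw [h]
  refine sum_congr rfl fun a _ => ?_
  rw [Ring.choose_neg, Ring.choose_natCast, show ((L + 1 : ℕ) : ℤ) + a - 1 = ((L + a : ℕ) : ℤ) by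
    push_cast; ring, Ring.choose_natCast, Int.negOnePow_def, Units.smul_def]
  simp [mul_assoc]

lemma alternating_vandermonde_factorial (P M : ℕ) :
    ∑ a ∈ range (M + 1), (-1 : ℝ) ^ a * (P + a)! / (a ! * (M - a)! * (P + M + a)!) =
      (2 * M - 1).choose M * P ! / (P + 2 * M)! := by
  rcases Nat.eq_zero_or_pos M with rfl | hM
  · simp [div_self (Nat.cast_ne_zero.mpr (Nat.factorial_ne_zero P) : (P ! : ℝ) ≠ 0)]
  have h : ∑ a ∈ range (M + 1), (-1 : ℝ) ^ a * (P + a).choose a * (P + 2 * M).choose (M - a) =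
      (2 * M - 1).choose M := by
    rw [show P + 2 * M = P + 1 + (2 * M - 1) by omega]
    exact_mod_cast alternating_vandermonde P (2 * M - 1) M
  have hP : (P ! : ℝ) ≠ 0 := by positivity
  have hPM : ((P + 2 * M)! : ℝ) ≠ 0 := by positivity
  rw [← h, sum_mul, sum_div]
  refine sum_congr rfl fun a ha => ?_
  have ha : a ≤ M := Nat.lt_succ_iff.mp (mem_range.mp ha)
  rw [add_comm P a, Nat.cast_add_choose, Nat.cast_choose ℝ (by omega : M - a ≤ P + 2 * M),
    show P + 2 * M - (M - a) = a + P + M by omega, show P + M + a = a + P + M by ring]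
  field_simp

lemma sum_range_neg_one_pow_div_factorial_mul_factorial {M : ℕ} (hM : M ≠ 0) :
    ∑ s ∈ range M, (-1 : ℝ) ^ (M + 1 + s) / ((M - s)! * s !) = 1 / M ! := by
  have h : ∑ s ∈ range (M + 1), ((-1) ^ s * M.choose s : ℝ) = 0 := by
    exact_mod_cast Int.alternating_sum_range_choose_of_ne hM
  rw [sum_range_succ, Nat.choose_self] at h
  have hM' : (M ! : ℝ) ≠ 0 := by positivity
  calc ∑ s ∈ range M, (-1 : ℝ) ^ (M + 1 + s) / ((M - s)! * s !)
      = (-1) ^ (M + 1) / M ! * ∑ s ∈ range M, (-1 : ℝ) ^ s * M.choose s := by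
        rw [mul_sum]
        refine sum_congr rfl fun s hs => ?_
        rw [Nat.cast_choose ℝ (mem_range.mp hs).le, pow_add]
        field_simp
    _ = 1 / M ! := by
        rw [eq_neg_of_add_eq_zero_left h, Nat.cast_one, pow_succ]
        field_simp
        rw [← pow_mul, mul_comm, pow_mul]
        norm_num

lemma sum_range_neg_one_pow_div_mul_sum (g : ℕ → ℝ) (Q : ℕ) :
    ∑ j ∈ range (Q + 1), (-1 : ℝ) ^ (j + Q) / (Q + 1 - j)! * ∑ r ∈ range (j + 1), g r / (j - r)! =
      ∑ r ∈ range (Q + 1), g r / (Q + 1 - r)! := by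
  simp_rw [mul_sum, range_eq_Ico]
  rw [← sum_Ico_Ico_comm]
  refine sum_congr rfl fun r hr => ?_
  have hr : r ≤ Q := Nat.lt_succ_iff.mp (mem_Ico.mp hr).2
  have h := sum_range_neg_one_pow_div_factorial_mul_factorial (M := Q + 1 - r) (by omega)
  rw [sum_Ico_eq_sum_range, ← mul_one_div, ← h, mul_sum, show Q + 1 - r = Q - r + 1 by omega]
  refine sum_congr rfl fun s hs => ?_
  rw [show r + s - r = s by omega, show Q + 1 - (r + s) = Q - r + 1 - s by omega,
    neg_one_pow_eq_of_mod_two_eq (b := Q - r + 1 + 1 + s) (by omega)]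
  ring

/-- `C(N + i, 2i)` times the `i`-th Catalan number. -/
noncomputable def catalanWeight (N i : ℕ) : ℝ := (N + i)! / (i ! * (i + 1)! * (N - i)!)

lemma sum_range_neg_one_pow_mul_catalanWeight_partial {N j : ℕ} (hj : j < N) :
    ∑ i ∈ range (j + 1), (-1 : ℝ) ^ i * catalanWeight N i =
      (-1) ^ j * ((N + j + 1)! / (j ! * (j + 1)! * (N - 1 - j)! * (N * (N + 1)))) := by
  induction j with
  | zero =>
    obtain ⟨M, rfl⟩ : ∃ M, N = M + 1 := ⟨N - 1, by omega⟩
    simp only [catalanWeight, zero_add, sum_range_one, pow_zero, one_mul, add_zero,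
      Nat.add_sub_cancel, Nat.factorial_zero, Nat.cast_one, Nat.factorial_succ,
      Nat.sub_zero]
    push_cast
    field_simp
  | succ j ih =>
    obtain ⟨L, rfl⟩ : ∃ L, N = j + L + 2 := ⟨N - j - 2, by omega⟩
    rw [sum_range_succ, ih (by omega), catalanWeight,
      show j + L + 2 + j + 1 = (2 * j + L + 2) + 1 by ring,
      show j + L + 2 + (j + 1) = (2 * j + L + 2) + 1 by ring,
      show j + L + 2 - 1 - j = L + 1 by omega, show j + L + 2 - 1 - (j + 1) = L by omega,
      show j + L + 2 - (j + 1) = L + 1 by omega]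
    simp only [Nat.factorial_succ, pow_succ]
    push_cast
    field_simp
    ring

lemma sum_range_neg_one_pow_mul_catalanWeight {N : ℕ} (hN : N ≠ 0) :
    ∑ i ∈ range (N + 1), (-1 : ℝ) ^ i * catalanWeight N i = 0 := by
  obtain ⟨M, rfl⟩ : ∃ M, N = M + 1 := ⟨N - 1, by omega⟩
  rw [sum_range_succ, sum_range_neg_one_pow_mul_catalanWeight_partial (Nat.lt_succ_self M),
    catalanWeight, show M + 1 + M + 1 = 2 * M + 2 by ring, show M + 1 + (M + 1) = 2 * M + 2 by ring,
    show M + 1 - 1 - M = 0 by omega, Nat.sub_self]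
  simp only [Nat.factorial_succ, Nat.factorial_zero, pow_succ]
  push_cast
  field_simp
  ring

noncomputable def onesCoeff (p r : ℕ) : ℝ :=
  (∑ s ∈ range (r + 1), (-1) ^ s * catalanWeight (p + r) (p + s)) / (2 * p + r)!

lemma onesCoeff_zero (p : ℕ) : onesCoeff p 0 = 1 / (p ! * (p + 1)!) := by
  simp only [onesCoeff, zero_add, sum_range_one, pow_zero, one_mul, catalanWeight, add_zero,
    Nat.sub_self, Nat.factorial_zero, Nat.cast_one, mul_one, ← two_mul]
  field_simp

lemma sum_range_neg_one_pow_mul_catalanWeight_head {p r : ℕ} (hr : r ≠ 0) :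
    ∑ i ∈ range p, (-1 : ℝ) ^ (p + i) * catalanWeight (p + r) i =
      -(onesCoeff p r * (2 * p + r)!) := by
  have h := sum_range_neg_one_pow_mul_catalanWeight (N := p + r) (by omega)
  rw [show p + r + 1 = p + (r + 1) by ring, sum_range_add, add_eq_zero_iff_eq_neg] at h
  rw [onesCoeff, div_mul_cancel₀ _ (by positivity)]
  calc ∑ i ∈ range p, (-1 : ℝ) ^ (p + i) * catalanWeight (p + r) i
      = (-1) ^ p * ∑ i ∈ range p, (-1) ^ i * catalanWeight (p + r) i := by
        rw [mul_sum]
        exact sum_congr rfl fun i _ => by ring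
    _ = _ := by
        rw [h, mul_neg, mul_sum]
        refine congrArg _ (sum_congr rfl fun s _ => ?_)
        rw [← mul_assoc, ← pow_add, neg_one_pow_eq_of_mod_two_eq (b := s) (by omega)]

noncomputable def monomialWeight : ∀ n : ℕ, (Fin n → ℕ) → ℝ
  | 0, _ => 1
  | n + 1, E => monomialWeight n (fun j => E j.castSucc) / (∑ j, E j + n + 1 : ℕ)

lemma integral_sum_mul_pow {ι : Type*} (s : Finset ι) (c : ι → ℝ) (e : ι → ℕ) (t : ℝ) :
    ∫ x in (0 : ℝ)..t, ∑ i ∈ s, c i * x ^ e i = ∑ i ∈ s, c i / (e i + 1 : ℕ) * t ^ (e i + 1) := by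
  rw [intervalIntegral.integral_finsetSum fun i _ => by
    apply Continuous.intervalIntegrable; fun_prop]
  refine sum_congr rfl fun i _ => ?_
  rw [intervalIntegral.integral_const_mul, integral_pow, zero_pow (Nat.succ_ne_zero _)]
  push_cast
  ring

lemma iterInt_sum_mul_prod_pow (n : ℕ) {ι : Type*} (s : Finset ι) (c : ι → ℝ)
    (E : ι → Fin n → ℕ) (t : ℝ) :
    iterInt n (fun u => ∑ i ∈ s, c i * ∏ j, u j ^ E i j) t =
      ∑ i ∈ s, c i * monomialWeight n (E i) * t ^ (∑ j, E i j + n) := by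
  induction n generalizing c t with
  | zero => simp [iterInt, monomialWeight]
  | succ n ih =>
    have hslice (x : ℝ) : iterInt n (fun u => ∑ i ∈ s, c i * ∏ j, Fin.snoc u x j ^ E i j) x =
        ∑ i ∈ s, c i * monomialWeight n (fun j => E i j.castSucc) *
          x ^ (∑ j : Fin n, E i j.castSucc + n + E i (Fin.last n)) := by
      simp_rw [Fin.prod_univ_castSucc, Fin.snoc_castSucc, Fin.snoc_last, ← mul_assoc,
        mul_right_comm _ _ (x ^ _)]
      rw [ih]
      exact sum_congr rfl fun i _ => by rw [pow_add]; ring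
    rw [iterInt]
    simp_rw [hslice, integral_sum_mul_pow, monomialWeight, Fin.sum_univ_castSucc]
    refine sum_congr rfl fun i _ => ?_
    push_cast
    ring

lemma iterInt_eval_of_support_subset {n : ℕ} (p : MvPolynomial (Fin n) ℝ)
    {s : Finset (Fin n →₀ ℕ)} (hs : p.support ⊆ s) (t : ℝ) :
    iterInt n (fun u => eval u p) t =
      ∑ d ∈ s, coeff d p * monomialWeight n d * t ^ (∑ j, d j + n) := by
  have hp : (fun u : Fin n → ℝ => eval u p) = fun u => ∑ d ∈ s, coeff d p * ∏ j, u j ^ d j := by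
    funext u
    rw [eval_eq']
    exact sum_subset hs fun d _ hd => by rw [notMem_support_iff.mp hd, zero_mul]
  rw [hp, iterInt_sum_mul_prod_pow]

noncomputable def polyIterInt (n : ℕ) (t : ℝ) : MvPolynomial (Fin n) ℝ →ₗ[ℝ] ℝ where
  toFun p := iterInt n (fun u => eval u p) t
  map_add' p q := by
    rw [iterInt_eval_of_support_subset p subset_union_left,
      iterInt_eval_of_support_subset q subset_union_right,
      iterInt_eval_of_support_subset (p + q) support_add, ← sum_add_distrib]
    simp only [coeff_add, add_mul]
  map_smul' c p := by
    simp only [RingHom.id_apply, smul_eq_mul]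
    rw [iterInt_eval_of_support_subset (c • p) (s := p.support) Finsupp.support_smul,
      iterInt_eval_of_support_subset p (s := p.support) subset_rfl, mul_sum]
    simp only [coeff_smul, smul_eq_mul, mul_assoc]

lemma polyIterInt_apply (n : ℕ) (t : ℝ) (p : MvPolynomial (Fin n) ℝ) :
    polyIterInt n t p = iterInt n (fun u => eval u p) t := rfl

lemma polyIterInt_rename_castSucc_mul_X_last_pow {n : ℕ} (q : MvPolynomial (Fin n) ℝ) (e : ℕ)
    (t : ℝ) :
    polyIterInt (n + 1) t (rename Fin.castSucc q * X (Fin.last n) ^ e) =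
      ∫ x in (0 : ℝ)..t, x ^ e * polyIterInt n x q := by
  refine intervalIntegral.integral_congr fun x _ => ?_
  rw [← smul_eq_mul (x ^ e), ← map_smul, polyIterInt_apply]
  congr 1
  funext u
  simp only [eval_mul, eval_pow, eval_X, eval_rename, Fin.snoc_last, Function.comp_def,
    Fin.snoc_castSucc, smul_eval, mul_comm]

lemma polyIterInt_rename_castSucc {n : ℕ} (q : MvPolynomial (Fin n) ℝ) (t : ℝ) :
    polyIterInt (n + 1) t (rename Fin.castSucc q) = ∫ x in (0 : ℝ)..t, polyIterInt n x q := by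
  simpa using polyIterInt_rename_castSucc_mul_X_last_pow q 0 t

lemma polyIterInt_rename_castLE {p : ℕ} (Q : MvPolynomial (Fin p) ℝ) {ι : Type*} (s : Finset ι)
    (c : ι → ℝ) (e : ι → ℕ) (hQ : ∀ x, polyIterInt p x Q = ∑ i ∈ s, c i * x ^ e i) (k : ℕ)
    (t : ℝ) :
    polyIterInt (p + k) t (rename (Fin.castLE (Nat.le_add_right p k)) Q) =
      ∑ i ∈ s, c i * (e i)! / (e i + k)! * t ^ (e i + k) := by
  induction k generalizing t with
  | zero =>
    rw [show (Fin.castLE (Nat.le_add_right p 0) : Fin p → Fin (p + 0)) = id from rfl,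
      rename_id_apply]
    refine (hQ t).trans (sum_congr rfl fun i _ => ?_)
    rw [add_zero, mul_div_cancel_right₀ _ (Nat.cast_ne_zero.mpr (Nat.factorial_ne_zero _))]
  | succ k ih =>
    rw [show rename (Fin.castLE (Nat.le_add_right p (k + 1))) Q =
        rename Fin.castSucc (rename (Fin.castLE (Nat.le_add_right p k)) Q) by
      rw [rename_rename]; rfl]
    change polyIterInt (p + k + 1) t _ = _
    simp_rw [polyIterInt_rename_castSucc, ih, mul_div_right_comm _ _ ((_ + k)! : ℝ),
      integral_sum_mul_pow]
    refine sum_congr rfl fun i _ => ?_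
    rw [← add_assoc, Nat.factorial_succ]
    push_cast
    field_simp

lemma polyIterInt_rename_mul_X_pow {P i : ℕ} (hi : i < P) (r : MvPolynomial (Fin i) ℝ) (c : ℝ)
    (d e : ℕ) (hr : ∀ x, polyIterInt i x r = c * x ^ d) (t : ℝ) :
    polyIterInt P t (rename (Fin.castLE hi.le) r * X ⟨i, hi⟩ ^ e) =
      c * (d + e)! / (d + e + (P - i))! * t ^ (d + e + (P - i)) := by
  obtain ⟨k, rfl⟩ : ∃ k, P = i + 1 + k := ⟨P - i - 1, by omega⟩
  have hfirst (x : ℝ) : polyIterInt (i + 1) x (rename Fin.castSucc r * X (Fin.last i) ^ e) =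
      ∑ _ ∈ ({0} : Finset ℕ), c / (d + e + 1 : ℕ) * x ^ (d + e + 1) := by
    simp_rw [polyIterInt_rename_castSucc_mul_X_last_pow, hr, mul_left_comm _ c, ← pow_add,
      add_comm e d]
    rw [intervalIntegral.integral_const_mul, integral_pow, sum_singleton,
      zero_pow (Nat.succ_ne_zero _)]
    push_cast
    ring
  rw [show rename (Fin.castLE hi.le) r * X ⟨i, hi⟩ ^ e =
      rename (Fin.castLE (Nat.le_add_right (i + 1) k)) (rename Fin.castSucc r * X (Fin.last i) ^ e)
      by rw [map_mul, map_pow, rename_rename, rename_X]; rfl,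
    polyIterInt_rename_castLE _ _ _ _ hfirst, sum_singleton,
    show d + e + (i + 1 + k - i) = d + e + 1 + k by omega]
  rw [Nat.factorial_succ]
  push_cast
  field_simp

noncomputable def SPoly : ∀ n : ℕ, MvPolynomial (Fin n) ℝ
  | 0 => 1
  | n + 1 => ∑ i : Fin (n + 1), ((-1 : ℝ) ^ ((i : ℕ) + n) / (n + 1 - (i : ℕ))!) •
      (rename (Fin.castLE i.isLt.le) (SPoly i) * X i ^ (n + 1 - (i : ℕ)))

lemma eval_SPoly (n : ℕ) (u : Fin n → ℝ) : eval u (SPoly n) = S n u := by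
  induction n using Nat.strong_induction_on with
  | _ n ih =>
    cases n with
    | zero => simp [SPoly, S]
    | succ n =>
      rw [SPoly, S, map_sum]
      refine sum_congr rfl fun i _ => ?_
      rw [smul_eval, eval_mul, eval_pow, eval_X, eval_rename, ih i i.isLt]
      simp only [Function.comp_def]
      ring

lemma polyIterInt_SPoly (p : ℕ) (t : ℝ) :
    polyIterInt p t (SPoly p) = t ^ (2 * p) / (p ! * (p + 1)!) := by
  induction p using Nat.strong_induction_on generalizing t with
  | _ p ih =>
    cases p with
    | zero => simp [polyIterInt_apply, iterInt, SPoly]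
    | succ n =>
      have hterm (i : Fin (n + 1)) :
          polyIterInt (n + 1) t (rename (Fin.castLE i.isLt.le) (SPoly i) * X i ^ (n + 1 - i)) =
            (n + 1 - i)! * catalanWeight (n + 1) i / (2 * (n + 1))! * t ^ (2 * (n + 1)) := by
        have h := polyIterInt_rename_mul_X_pow i.isLt (SPoly i) _ (2 * i) (n + 1 - i)
          (fun x => (ih i i.isLt x).trans (div_eq_inv_mul _ _)) t
        rw [Fin.eta, show 2 * (i : ℕ) + (n + 1 - i) + (n + 1 - i) = 2 * (n + 1) by omega,
          show 2 * (i : ℕ) + (n + 1 - i) = n + 1 + i by omega] at h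
        rw [h, catalanWeight, show n + 1 - (i : ℕ) = (n - i) + 1 by omega]
        field_simp
      rw [SPoly, map_sum]
      simp_rw [map_smul, hterm, smul_eq_mul]
      have halt := sum_range_neg_one_pow_mul_catalanWeight (Nat.succ_ne_zero n)
      rw [sum_range_succ, add_eq_zero_iff_eq_neg] at halt
      calc ∑ i : Fin (n + 1), (-1 : ℝ) ^ ((i : ℕ) + n) / (n + 1 - i)! *
            ((n + 1 - i)! * catalanWeight (n + 1) i / (2 * (n + 1))! * t ^ (2 * (n + 1)))
          = (-1) ^ n * (∑ i ∈ range (n + 1), (-1 : ℝ) ^ i * catalanWeight (n + 1) i) *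
              (t ^ (2 * (n + 1)) / (2 * (n + 1))!) := by
            rw [Fin.sum_univ_eq_sum_range (fun i => (-1 : ℝ) ^ (i + n) / (n + 1 - i)! *
              ((n + 1 - i)! * catalanWeight (n + 1) i / (2 * (n + 1))! * t ^ (2 * (n + 1)))),
              mul_sum, sum_mul]
            refine sum_congr rfl fun i _ => ?_
            field_simp
            ring
        _ = t ^ (2 * (n + 1)) / ((n + 1)! * (n + 1 + 1)!) := by
            rw [halt, catalanWeight, show n + 1 + (n + 1) = 2 * (n + 1) by ring, Nat.sub_self,
              Nat.factorial_zero, pow_succ]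
            field_simp
            rw [← pow_mul, mul_comm, pow_mul]
            norm_num

/-- `S_N` as a polynomial in its first `p` arguments, the remaining ones set to `1`. -/
noncomputable def SOnes (p N : ℕ) : MvPolynomial (Fin p) ℝ :=
  bind₁ (fun j : Fin N => if h : (j : ℕ) < p then X ⟨j, h⟩ else 1) (SPoly N)

lemma SOnes_self (p : ℕ) : SOnes p p = SPoly p := by
  simp [SOnes, bind₁_X_left]

lemma SOnes_succ (p N : ℕ) :
    SOnes p (N + 1) = ∑ i : Fin (N + 1), ((-1 : ℝ) ^ ((i : ℕ) + N) / (N + 1 - (i : ℕ))!) •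
      if h : (i : ℕ) < p then rename (Fin.castLE h.le) (SPoly i) * X ⟨i, h⟩ ^ (N + 1 - (i : ℕ))
      else SOnes p i := by
  rw [SOnes, SPoly, map_sum]
  refine sum_congr rfl fun i _ => ?_
  rw [map_smul, map_mul, map_pow, bind₁_X_right, bind₁_rename]
  split_ifs with h
  · rw [rename_eq_aeval, aeval_eq_bind₁]
    congr 2
    refine congrArg (bind₁ · (SPoly i)) (funext fun j => ?_)
    simp [lt_of_lt_of_le j.isLt h.le]
    rfl
  · rw [one_pow, mul_one]
    rfl

lemma eval_rename_SOnes (p m : ℕ) (u : Fin (p + m) → ℝ) :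
    eval u (rename (Fin.castLE (Nat.le_add_right p m)) (SOnes p (p + m))) = Snm (p + m) m u := by
  rw [Snm, ← eval_SPoly, SOnes, eval_rename]
  change eval₂Hom (RingHom.id ℝ) _ (bind₁ _ _) = _
  rw [eval₂Hom_bind₁]
  refine congrArg (fun f => eval₂Hom (RingHom.id ℝ) f (SPoly (p + m))) (funext fun j => ?_)
  by_cases h : (j : ℕ) < p <;> simp [h]

lemma polyIterInt_SOnes (p q : ℕ) (t : ℝ) :
    polyIterInt p t (SOnes p (p + q)) =
      ∑ r ∈ range (q + 1), (-1) ^ r * onesCoeff p r * t ^ (2 * p + r) / (q - r)! := by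
  induction q using Nat.strong_induction_on with
  | _ q ih =>
    cases q with
    | zero =>
      rw [add_zero, SOnes_self, polyIterInt_SPoly, sum_range_one, onesCoeff_zero]
      simp [div_eq_mul_inv, mul_comm]
    | succ Q =>
      set f : ℕ → ℝ := fun i => (-1) ^ (i + (p + Q)) / (p + Q + 1 - i)! * polyIterInt p t
        (if h : i < p then rename (Fin.castLE h.le) (SPoly i) * X ⟨i, h⟩ ^ (p + Q + 1 - i)
          else SOnes p i)
      have hhead : ∑ i ∈ range p, f i =
          (-1) ^ (Q + 1) * onesCoeff p (Q + 1) * t ^ (2 * p + (Q + 1)) / (Q + 1 - (Q + 1))! := by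
        calc ∑ i ∈ range p, f i
            = (-1) ^ Q * (∑ i ∈ range p, (-1) ^ (p + i) * catalanWeight (p + (Q + 1)) i) *
                (t ^ (2 * p + (Q + 1)) / (2 * p + (Q + 1))!) := by
              rw [mul_sum, sum_mul]
              refine sum_congr rfl fun i hi => ?_
              have hi : i < p := mem_range.mp hi
              simp only [f, dif_pos hi]
              rw [polyIterInt_rename_mul_X_pow hi (SPoly i) _ (2 * i) _
                  (fun x => (polyIterInt_SPoly i x).trans (div_eq_inv_mul _ _)) t,
                show 2 * i + (p + Q + 1 - i) = p + (Q + 1) + i by omega,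
                show p + (Q + 1) + i + (p - i) = 2 * p + (Q + 1) by omega, catalanWeight,
                show p + (Q + 1) - i = p + Q + 1 - i by omega,
                neg_one_pow_eq_of_mod_two_eq (a := i + (p + Q)) (b := Q + (p + i)) (by omega),
                pow_add]
              field_simp
          _ = _ := by
              rw [sum_range_neg_one_pow_mul_catalanWeight_head (Nat.succ_ne_zero Q),
                Nat.sub_self, Nat.factorial_zero, Nat.cast_one, div_one, pow_succ]
              field_simp
      have htail : ∑ j ∈ range (Q + 1), f (p + j) =
          ∑ r ∈ range (Q + 1), (-1) ^ r * onesCoeff p r * t ^ (2 * p + r) / (Q + 1 - r)! := by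
        rw [← sum_range_neg_one_pow_div_mul_sum]
        refine sum_congr rfl fun j hj => ?_
        have hj : j < Q + 1 := mem_range.mp hj
        simp only [f, dif_neg (Nat.not_lt.mpr (Nat.le_add_right p j)), ih j hj,
          show p + Q + 1 - (p + j) = Q + 1 - j by omega,
          neg_one_pow_eq_of_mod_two_eq (a := p + j + (p + Q)) (b := j + Q) (by omega)]
      rw [← add_assoc, SOnes_succ, map_sum]
      simp_rw [map_smul, smul_eq_mul]
      rw [Fin.sum_univ_eq_sum_range f, show p + Q + 1 = p + (Q + 1) by ring, sum_range_add,
        hhead, htail, sum_range_succ _ (Q + 1)]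
      ring

lemma iterInt_Snm (p m : ℕ) :
    iterInt (p + m) (Snm (p + m) m) 1 =
      ∑ r ∈ range (m + 1),
        (-1) ^ r * onesCoeff p r / (m - r)! * ((2 * p + r)! / (2 * p + r + m)!) := by
  have hQ (x : ℝ) : polyIterInt p x (SOnes p (p + m)) =
      ∑ r ∈ range (m + 1), (-1) ^ r * onesCoeff p r / (m - r)! * x ^ (2 * p + r) := by
    rw [polyIterInt_SOnes]
    exact sum_congr rfl fun r _ => by ring
  rw [show Snm (p + m) m = fun u => eval u (rename (Fin.castLE (Nat.le_add_right p m))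
      (SOnes p (p + m))) from funext fun u => (eval_rename_SOnes p m u).symm,
    ← polyIterInt_apply, polyIterInt_rename_castLE _ _ _ _ hQ]
  simp only [one_pow, mul_one, mul_div_assoc]

lemma sum_Ico_neg_one_pow_mul_catalanWeight (p m s : ℕ) (hs : s ≤ m) :
    ∑ r ∈ Ico s (m + 1), (-1 : ℝ) ^ (r + s) * catalanWeight (p + r) (p + s) /
        ((m - r)! * (2 * p + r + m)!) =
      (2 * (m - s) - 1).choose (m - s) * (2 * p + 2 * s)! /
        ((p + s)! * (p + s + 1)! * (2 * p + 2 * m)!) := by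
  have h := alternating_vandermonde_factorial (2 * p + 2 * s) (m - s)
  rw [show 2 * p + 2 * s + 2 * (m - s) = 2 * p + 2 * m by omega] at h
  rw [sum_Ico_eq_sum_range, show m + 1 - s = m - s + 1 by omega,
    show ((p + s)! * (p + s + 1)! * (2 * p + 2 * m)! : ℝ) =
      (2 * p + 2 * m)! * ((p + s)! * (p + s + 1)!) by ring, ← div_div, ← h,
    sum_div]
  refine sum_congr rfl fun a ha => ?_
  have ha : a ≤ m - s := Nat.lt_succ_iff.mp (mem_range.mp ha)
  rw [catalanWeight, show p + (s + a) + (p + s) = 2 * p + 2 * s + a by ring,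
    show p + (s + a) - (p + s) = a by omega, show m - (s + a) = m - s - a by omega,
    show 2 * p + (s + a) + m = 2 * p + 2 * s + (m - s) + a by omega,
    neg_one_pow_eq_of_mod_two_eq (a := s + a + s) (b := a) (by omega)]
  field_simp

lemma sum_onesCoeff_eq (p m : ℕ) :
    ∑ r ∈ range (m + 1), (-1) ^ r * onesCoeff p r / (m - r)! * ((2 * p + r)! / (2 * p + r + m)!) =
      1 / ((p + m)! * (p + m + 1)!) + 1 / (2 * (p + m))! *
        ∑ k ∈ Icc 1 m, ((2 * (p + m) - 2 * k)! : ℝ) / (((p + m - k)! : ℝ) * (p + m + 1 - k)!) *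
          ((2 * k - 1).choose k : ℝ) := by
  calc ∑ r ∈ range (m + 1), (-1) ^ r * onesCoeff p r / (m - r)! * ((2 * p + r)! / (2 * p + r + m)!)
      = ∑ r ∈ range (m + 1), ∑ s ∈ range (r + 1),
          (-1 : ℝ) ^ (r + s) * catalanWeight (p + r) (p + s) / ((m - r)! * (2 * p + r + m)!) := by
        refine sum_congr rfl fun r _ => ?_
        simp only [onesCoeff, sum_div, mul_sum, sum_mul]
        refine sum_congr rfl fun s _ => ?_
        rw [pow_add]
        field_simp
    _ = ∑ s ∈ range (m + 1), ((2 * (m - s) - 1).choose (m - s) : ℝ) * (2 * p + 2 * s)! /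
          ((p + s)! * (p + s + 1)! * (2 * p + 2 * m)!) := by
        simp_rw [range_eq_Ico]
        rw [← sum_Ico_Ico_comm]
        exact sum_congr rfl fun s hs =>
          sum_Ico_neg_one_pow_mul_catalanWeight p m s (Nat.lt_succ_iff.mp (mem_Ico.mp hs).2)
    _ = _ := by
        rw [← sum_range_reflect, sum_range_succ', mul_sum, add_comm,
          ← Ico_add_one_right_eq_Icc, sum_Ico_eq_sum_range, Nat.add_sub_cancel]
        congr 1
        · simp only [Nat.sub_zero, Nat.sub_self, mul_zero, Nat.zero_sub,
            Nat.choose_zero_right, Nat.cast_one, one_mul, ← mul_add]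
          field_simp
        · refine sum_congr rfl fun k hk => ?_
          have hk : k < m := mem_range.mp hk
          rw [add_comm 1 k, show m - (m - (k + 1)) = k + 1 by omega,
            show 2 * p + 2 * (m - (k + 1)) = 2 * (p + m) - 2 * (k + 1) by omega,
            show p + (m - (k + 1)) = p + m - (k + 1) by omega,
            show p + m - (k + 1) + 1 = p + m + 1 - (k + 1) by omega, ← mul_add]
          field_simp

theorem stmt5_general (n m : ℕ) (hmn : m ≤ n) :
    iterInt n (Snm n m) 1
      = 1 / (Nat.factorial n * Nat.factorial (n + 1)) +
        (1 / (Nat.factorial (2 * n) : ℝ)) *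
          ∑ k ∈ Finset.Icc 1 m,
            (Nat.factorial (2 * n - 2 * k) : ℝ) /
                ((Nat.factorial (n - k) : ℝ) * (Nat.factorial (n + 1 - k) : ℝ)) *
              (Nat.choose (2 * k - 1) k : ℝ) := by
  obtain ⟨p, rfl⟩ : ∃ p, n = p + m := ⟨n - m, by omega⟩
  rw [iterInt_Snm, sum_onesCoeff_eq]

theorem stmt5 (n m : ℕ) (hm : 1 ≤ m) (hmn : m ≤ n) :
    iterInt n (Snm n m) 1
      = 1 / (Nat.factorial n * Nat.factorial (n + 1)) +
        (1 / (Nat.factorial (2 * n) : ℝ)) *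
          ∑ k ∈ Finset.Icc 1 m,
            (Nat.factorial (2 * n - 2 * k) : ℝ) /
                ((Nat.factorial (n - k) : ℝ) * (Nat.factorial (n + 1 - k) : ℝ)) *
              (Nat.choose (2 * k - 1) k : ℝ) :=
  stmt5_general n m hmn
end

section
/- Let X_1,...,X_d be i.i.d. random variables uniformly distributed on [0,1], and let X_{1:d} ≤ ··· ≤ X_{d:d} be their order statistics. Then E[F_T(X_{1:d},...,X_{d:d})] = 1/(d+1), where F_T is the joint distribution function of (X_{1:d},...,X_{d:d}). -/
/-!
Pairing `X` with an independent copy `Y` turns the expectation into the probability that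
`Y_{i:d} ≤ X_{i:d}` for every `i`, i.e. that below every threshold there are at least as many
`Y`'s as `X`'s. Almost surely the `2d` pooled points are distinct, and their relative order is
uniformly distributed over the `(2d)!` orderings. Reading the pooled sample in increasing order,
with an up-step for each `Y` and a down-step for each `X`, the event says exactly that the word
is a Dyck word, and each of the `catalan d` Dyck words comes from `d! * d!` orderings. Hence the
probability is `catalan d * d! * d! / (2d)! = 1 / (d + 1)`.
-/

open MeasureTheory

/-- The uniform distribution on `[0,1]`. -/
noncomputable def unif : Measure ℝ := volume.restrict (Set.Icc 0 1)

/-- The joint distribution of `d` i.i.d. uniform `[0,1]` random variables. -/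
noncomputable def unifPi (d : ℕ) : Measure (Fin d → ℝ) :=
  Measure.pi fun _ => unif

/-- The sorting (order statistic) map: `sortVec x` is the nondecreasing
rearrangement of the vector `x`. -/
noncomputable def sortVec {d : ℕ} (x : Fin d → ℝ) : Fin d → ℝ :=
  x ∘ Tuple.sort x

/-- The joint distribution function of the order statistic of `d` i.i.d.
uniform `[0,1]` random variables. -/
noncomputable def FT (d : ℕ) (x : Fin d → ℝ) : ℝ :=
  (((unifPi d).map sortVec) {y | ∀ i, y i ≤ x i}).toReal

open Finset DyckStep
open scoped ENNReal Nat

section OrderStatistics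

variable {d : ℕ}

theorem sortVec_le_iff_lt_card (x : Fin d → ℝ) (t : ℝ) (i : Fin d) :
    sortVec x i ≤ t ↔ (i : ℕ) < #{j | x j ≤ t} := by
  rw [sortVec, ← Tuple.lt_card_le_iff_apply_le_of_monotone (Tuple.monotone_sort x)]
  have : #{j | (x ∘ Tuple.sort x) j ≤ t} = #{j | x j ≤ t} :=
    card_equiv (Tuple.sort x) (by simp)
  rw [this]

theorem measurable_sortVec : Measurable (sortVec : (Fin d → ℝ) → Fin d → ℝ) := by
  refine measurable_pi_lambda _ fun i => measurable_of_Iic fun t => ?_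
  have hcard : Measurable fun x : Fin d → ℝ => #{j | x j ≤ t} := by
    simp_rw [card_filter]
    exact Finset.measurable_sum _ fun j _ =>
      Measurable.ite (measurableSet_le (measurable_pi_apply j) measurable_const)
        measurable_const measurable_const
  have : (fun x => sortVec x i) ⁻¹' Set.Iic t =
      (fun x => #{j | x j ≤ t}) ⁻¹' {k | i < k} := by
    ext x
    simp [sortVec_le_iff_lt_card]
  rw [this]
  exact hcard .of_discrete

theorem forall_sortVec_le_iff_card_le (x y : Fin d → ℝ) :
    (∀ i, sortVec y i ≤ sortVec x i) ↔ ∀ t, #{j | x j ≤ t} ≤ #{j | y j ≤ t} := by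
  refine ⟨fun h t => ?_, fun h i => ?_⟩
  · by_contra! hlt
    have hd : #{j | y j ≤ t} < d :=
      hlt.trans_le (card_le_univ _ |>.trans_eq (Fintype.card_fin d))
    have hx := (sortVec_le_iff_lt_card x t ⟨_, hd⟩).2 hlt
    exact (lt_irrefl _) ((sortVec_le_iff_lt_card y t ⟨_, hd⟩).1 ((h _).trans hx))
  · exact (sortVec_le_iff_lt_card y _ i).2 <|
      ((sortVec_le_iff_lt_card x _ i).1 le_rfl).trans_le (h _)

end OrderStatistics

section OrderCells

variable {ι : Type*} {n : ℕ}

def orderCell (e : Fin n ≃ ι) : Set (ι → ℝ) := {z | StrictMono (z ∘ e)}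

theorem measurableSet_orderCell (e : Fin n ≃ ι) : MeasurableSet (orderCell e) := by
  simp only [orderCell, StrictMono, Set.ofPred_forall]
  exact MeasurableSet.iInter fun a => .iInter fun b => .iInter fun _ =>
    measurableSet_lt (measurable_pi_apply _) (measurable_pi_apply _)

theorem injective_of_mem_orderCell {e : Fin n ≃ ι} {z : ι → ℝ} (hz : z ∈ orderCell e) :
    Function.Injective z :=
  hz.injective.of_comp_right e.surjective

theorem disjoint_orderCell {e e' : Fin n ≃ ι} (h : e ≠ e') :
    Disjoint (orderCell e) (orderCell e') := by
  refine Set.disjoint_left.2 fun z hz hz' => h ?_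
  have : z ∘ e = z ∘ e' := (StrictMono.range_inj hz hz').1 <| by
    rw [Set.range_comp, Set.range_comp, e.range_eq_univ, e'.range_eq_univ]
  exact Equiv.ext fun k => injective_of_mem_orderCell hz (congrFun this k)

theorem iUnion_orderCell [Fintype ι] (hn : Fintype.card ι = n) :
    ⋃ e : Fin n ≃ ι, orderCell e = {z | Function.Injective z} := by
  refine Set.Subset.antisymm (Set.iUnion_subset fun e z => injective_of_mem_orderCell) ?_
  intro z hz
  let e₀ : Fin n ≃ ι := (Fintype.equivFinOfCardEq hn).symm
  refine Set.mem_iUnion.2 ⟨(Tuple.sort (z ∘ e₀)).trans e₀, ?_⟩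
  exact (Tuple.monotone_sort (z ∘ e₀)).strictMono_of_injective
    ((hz.comp e₀.injective).comp (Tuple.sort _).injective)

end OrderCells

section CellMeasure

variable {ι : Type*} [Fintype ι] [DecidableEq ι] {n : ℕ} (μ : Measure ℝ)

theorem pi_setOf_apply_eq_apply_null [SigmaFinite μ] [NullSingletonClass μ] {i j : ι}
    (hij : i ≠ j) :
    Measure.pi (fun _ : ι => μ) {z | z i = z j} = 0 := by
  have hmp := measurePreserving_piEquivPiSubtypeProd (fun _ : ι => μ) (· = i)
  let S : Set (((k : {k // k = i}) → ℝ) × ((k : {k // ¬k = i}) → ℝ)) :=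
    {q | q.1 ⟨i, rfl⟩ = q.2 ⟨j, hij.symm⟩}
  have hS : MeasurableSet S := measurableSet_eq_fun measurable_fst.eval measurable_snd.eval
  rw [show {z : ι → ℝ | z i = z j} =
      MeasurableEquiv.piEquivPiSubtypeProd _ _ ⁻¹' S from rfl, hmp.measure_preimage hS.nullMeasurableSet, Measure.measure_prod_null hS]
  refine Filter.Eventually.of_forall fun a => ?_
  simpa [S, eq_comm] using
    Measure.pi_hyperplane (fun _ : {k // ¬k = i} => μ) ⟨j, hij.symm⟩ (a ⟨i, rfl⟩)

theorem ae_injective_pi [SigmaFinite μ] [NullSingletonClass μ] :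
    ∀ᵐ z ∂Measure.pi (fun _ : ι => μ), Function.Injective z := by
  refine ae_iff.2 <|
    measure_mono_null (t := ⋃ (i) (j) (_ : i ≠ j), {z : ι → ℝ | z i = z j}) ?_ ?_
  · intro z hz
    simp only [Function.Injective, not_forall, Set.mem_ofPred_eq] at hz
    obtain ⟨i, j, hz, hij⟩ := hz
    exact Set.mem_iUnion₂.2 ⟨i, j, Set.mem_iUnion.2 ⟨hij, hz⟩⟩
  · exact measure_iUnion_null fun i => measure_iUnion_null fun j =>
      measure_iUnion_null fun hij => pi_setOf_apply_eq_apply_null μ hij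

omit [DecidableEq ι] in
theorem pi_orderCell_eq_pi_orderCell [SigmaFinite μ] (e e' : Fin n ≃ ι) :
    Measure.pi (fun _ : ι => μ) (orderCell e) = Measure.pi (fun _ : ι => μ) (orderCell e') := by
  let σ : Equiv.Perm ι := e.symm.trans e'
  have hpre : MeasurableEquiv.piCongrLeft (fun _ => ℝ) σ ⁻¹' orderCell e' = orderCell e := by
    ext z
    have : (MeasurableEquiv.piCongrLeft (fun _ => ℝ) σ z) ∘ e' = z ∘ e := by
      ext k
      rw [Function.comp_apply, show e' k = σ (e k) by simp [σ]]
      exact Equiv.piCongrLeft_apply_apply _ _ _ _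
    simp only [Set.mem_preimage, orderCell, Set.mem_ofPred_eq, this]
  rw [← hpre, (measurePreserving_piCongrLeft (fun _ => μ) σ).measure_preimage
    (measurableSet_orderCell e').nullMeasurableSet]

theorem pi_orderCell [IsProbabilityMeasure μ] [NullSingletonClass μ]
    (hn : Fintype.card ι = n) (e : Fin n ≃ ι) :
    Measure.pi (fun _ : ι => μ) (orderCell e) = (n ! : ℝ≥0∞)⁻¹ := by
  refine ENNReal.eq_inv_of_mul_eq_one_left ?_
  have hinj : Measure.pi (fun _ : ι => μ) {z | Function.Injective z} = 1 := by
    rw [← Set.univ_inter {z | _}, measure_inter_conull (ae_injective_pi μ), measure_univ]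
  rw [← hinj, ← iUnion_orderCell hn, measure_iUnion (fun _ _ => disjoint_orderCell)
    measurableSet_orderCell, tsum_fintype,
    sum_congr rfl fun e' _ => pi_orderCell_eq_pi_orderCell μ e' e, sum_const, card_univ,
    Fintype.card_equiv e, Fintype.card_fin, nsmul_eq_mul, mul_comm]

theorem pi_eq_card_mul_inv_factorial [IsProbabilityMeasure μ] [NullSingletonClass μ]
    (hn : Fintype.card ι = n) {S : Set (ι → ℝ)} (P : (Fin n ≃ ι) → Prop)
    (hS : ∀ e, ∀ z ∈ orderCell e, z ∈ S ↔ P e) :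
    Measure.pi (fun _ : ι => μ) S = Nat.card {e // P e} * (n ! : ℝ≥0∞)⁻¹ := by
  classical
  have hcells :
      S ∩ {z | Function.Injective z} = ⋃ e ∈ ({e | P e} : Finset _), orderCell e := by
    rw [← iUnion_orderCell hn, Set.inter_iUnion]
    refine Set.Subset.antisymm (Set.iUnion_subset fun e z ⟨hzS, hz⟩ =>
      Set.mem_iUnion₂.2 ⟨e, by simpa using (hS e z hz).1 hzS, hz⟩) ?_
    exact Set.iUnion₂_subset fun e he z hz =>
      Set.mem_iUnion.2 ⟨e, (hS e z hz).2 (by simpa using he), hz⟩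
  rw [← measure_inter_conull (ae_injective_pi μ), hcells,
    measure_biUnion_finset (fun _ _ _ _ => disjoint_orderCell) fun e _ =>
      measurableSet_orderCell e,
    sum_congr rfl fun e _ => pi_orderCell μ hn e, sum_const, nsmul_eq_mul,
    Nat.card_eq_fintype_card, Fintype.card_subtype]

end CellMeasure

section Ballot

variable {n : ℕ}

def Ballot (w : Fin n → Bool) : Prop :=
  ∀ m : ℕ, #{k : Fin n | (k : ℕ) < m ∧ w k = false} ≤
    #{k : Fin n | (k : ℕ) < m ∧ w k = true}

theorem StrictMono.exists_forall_le_iff_lt {g : Fin n → ℝ} (hg : StrictMono g) (m : ℕ) :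
    ∃ t, ∀ k, g k ≤ t ↔ (k : ℕ) < m := by
  rcases Nat.eq_zero_or_pos (min m n) with h0 | hpos
  · obtain ⟨b, hb⟩ := (Set.finite_range g).bddBelow
    refine ⟨b - 1, fun k => iff_of_false ?_ (by omega)⟩
    linarith [hb ⟨k, rfl⟩]
  · refine ⟨g ⟨min m n - 1, by omega⟩, fun k => ?_⟩
    rw [hg.le_iff_le, Fin.le_def]
    change (k : ℕ) ≤ min m n - 1 ↔ _
    omega

theorem ballot_iff_forall_card_le {g : Fin n → ℝ} (hg : StrictMono g) (w : Fin n → Bool) :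
    Ballot w ↔ ∀ t, #{k | g k ≤ t ∧ w k = false} ≤ #{k | g k ≤ t ∧ w k = true} := by
  have hsame : ∀ m t, (∀ k, g k ≤ t ↔ (k : ℕ) < m) →
      ∀ b, #{k | g k ≤ t ∧ w k = b} = #{k : Fin n | (k : ℕ) < m ∧ w k = b} :=
    fun m t h b => by simp only [h]
  refine ⟨fun h t => ?_, fun h m => ?_⟩
  · have hm : ∀ k, g k ≤ t ↔ (k : ℕ) < #{k | g k ≤ t} :=
      fun k => (Tuple.lt_card_le_iff_apply_le_of_monotone hg.monotone).symm
    simpa only [hsame _ t hm] using h _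
  · obtain ⟨t, ht⟩ := hg.exists_forall_le_iff_lt m
    simpa only [hsame m t ht] using h t

theorem card_filter_inl {α β : Type*} [Fintype α] [Fintype β] (p : α ⊕ β → Prop)
    [DecidablePred p] : #{a | p (.inl a)} = #{s | p s ∧ s.isRight = false} := by
  rw [← card_map Function.Embedding.inl]
  congr 1
  ext (s | s) <;> simp

theorem card_filter_inr {α β : Type*} [Fintype α] [Fintype β] (p : α ⊕ β → Prop)
    [DecidablePred p] : #{b | p (.inr b)} = #{s | p s ∧ s.isRight = true} := by
  rw [← card_map Function.Embedding.inr]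
  congr 1
  ext (s | s) <;> simp

theorem forall_sortVec_inr_le_sortVec_inl_iff {d : ℕ} {e : Fin n ≃ Fin d ⊕ Fin d}
    {z : Fin d ⊕ Fin d → ℝ} (hz : z ∈ orderCell e) :
    (∀ i, sortVec (fun j => z (.inr j)) i ≤ sortVec (fun j => z (.inl j)) i) ↔
      Ballot (Sum.isRight ∘ e) := by
  have hcard : ∀ (t : ℝ) (b : Bool),
      #{s | z s ≤ t ∧ s.isRight = b} = #{k | z (e k) ≤ t ∧ (e k).isRight = b} :=
    fun t b => card_equiv e.symm (by simp)
  have hinl : ∀ t, #{j | z (.inl j) ≤ t} = #{k | z (e k) ≤ t ∧ (e k).isRight = false} :=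
    fun t => (card_filter_inl (z · ≤ t)).trans (hcard t false)
  have hinr : ∀ t, #{j | z (.inr j) ≤ t} = #{k | z (e k) ≤ t ∧ (e k).isRight = true} :=
    fun t => (card_filter_inr (z · ≤ t)).trans (hcard t true)
  rw [forall_sortVec_le_iff_card_le, ballot_iff_forall_card_le hz]
  simp only [hinl, hinr, Function.comp_apply]

end Ballot

section Counting

variable {n : ℕ}

theorem card_equiv_comp_eq {α β γ : Type*} [Fintype α] [DecidableEq α] [Fintype β]
    [DecidableEq β] [Fintype γ] [DecidableEq γ] {f : α → γ} {g : β → γ}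
    (h : ∀ c, Fintype.card {a // f a = c} = Fintype.card {b // g b = c}) :
    Fintype.card {e : α ≃ β // g ∘ e = f} = ∏ c, (Fintype.card {a // f a = c})! := by
  -- Precomposing with `e₀⁻¹` identifies the fiber over `f` with the stabilizer of `f`.
  let e₀ : α ≃ β := Equiv.ofFiberEquiv fun c => Fintype.equivOfCardEq (h c)
  have he₀ : g ∘ e₀ = f := funext (Equiv.ofFiberEquiv_map _)
  rw [← DomMulAct.stabilizer_card f]
  refine Fintype.card_congr ((Equiv.equivCongr (Equiv.refl α) e₀.symm).subtypeEquiv fun e => ?_)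
  have : f ∘ Equiv.equivCongr (Equiv.refl α) e₀.symm e = g ∘ e := by
    rw [← he₀]; ext a; simp
  rw [this]

theorem count_take_ofFn {α : Type*} [DecidableEq α] (f : Fin n → α) (a : α) (m : ℕ) :
    ((List.ofFn f).take m).count a = #{k : Fin n | (k : ℕ) < m ∧ f k = a} := by
  induction n generalizing m with
  | zero => simp
  | succ n ih =>
    cases m with
    | zero => simp
    | succ m =>
      rw [List.ofFn_succ, List.take_succ_cons, List.count_cons, ih, Fin.card_filter_univ_succ]
      by_cases h : f 0 = a <;> simp [h, add_comm]

def boolDyckList (w : Fin n → Bool) : List DyckStep := List.ofFn fun k => cond (w k) U D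

theorem count_take_boolDyckList (w : Fin n → Bool) (m : ℕ) (b : Bool) :
    ((boolDyckList w).take m).count (cond b U D) = #{k : Fin n | (k : ℕ) < m ∧ w k = b} := by
  rw [boolDyckList, count_take_ofFn]
  refine congrArg card (filter_congr fun k _ => ?_)
  cases w k <;> cases b <;> simp

theorem count_boolDyckList (w : Fin n → Bool) (b : Bool) :
    (boolDyckList w).count (cond b U D) = #{k | w k = b} := by
  rw [← List.take_length (l := boolDyckList w), count_take_boolDyckList]
  simp [boolDyckList]

def ballotDyckWord {w : Fin n → Bool} (hw : Ballot w)
    (hbal : #{k | w k = true} = #{k | w k = false}) : DyckWord where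
  toList := boolDyckList w
  count_U_eq_count_D :=
    (count_boolDyckList w true).trans (hbal.trans (count_boolDyckList w false).symm)
  count_D_le_count_U m :=
    (count_take_boolDyckList w m false).trans_le
      ((hw m).trans_eq (count_take_boolDyckList w m true).symm)

theorem card_filter_true_add_card_filter_false (w : Fin n → Bool) :
    #{k | w k = true} + #{k | w k = false} = n := by
  simpa using card_filter_add_card_filter_not (s := univ) (fun k => w k = true)

theorem card_ballot (d : ℕ) :
    Nat.card {w : Fin (d + d) → Bool // Ballot w ∧ #{k | w k = true} = d} = catalan d := by
  have hbal : ∀ w : Fin (d + d) → Bool, #{k | w k = true} = d →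
      #{k | w k = true} = #{k | w k = false} := fun w hw => by
    have := card_filter_true_add_card_filter_false w
    omega
  let toDyck (w : {w : Fin (d + d) → Bool // Ballot w ∧ #{k | w k = true} = d}) :
      {p : DyckWord // p.semilength = d} :=
    ⟨ballotDyckWord w.2.1 (hbal w.1 w.2.2), (count_boolDyckList w.1 true).trans w.2.2⟩
  have hinj : Function.Injective toDyck := by
    intro w w' h
    have h' : boolDyckList w.1 = boolDyckList w'.1 := congrArg (fun p => p.1.toList) h
    refine Subtype.ext (funext fun k => ?_)
    have := congrFun (List.ofFn_injective h') k
    cases hw : w.1 k <;> cases hw' : w'.1 k <;> simp_all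
  have hsurj : Function.Surjective toDyck := by
    rintro ⟨p, hp⟩
    have hlen : p.toList.length = d + d := by rw [← p.two_mul_semilength_eq_length, hp, two_mul]
    let w : Fin (d + d) → Bool := fun k => decide (p.toList[(k : ℕ)] = U)
    have hw : boolDyckList w = p.toList := by
      refine List.ext_getElem (by simp [boolDyckList, hlen]) fun i h _ => ?_
      rcases (p.toList[i]).dichotomy with h | h <;> simp [boolDyckList, w, h]
    refine ⟨⟨w, fun m => ?_, ?_⟩, Subtype.ext (DyckWord.ext hw)⟩
    · rw [← count_take_boolDyckList w m false, ← count_take_boolDyckList w m true, hw]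
      exact p.count_D_le_count_U m
    · rw [← count_boolDyckList w true, hw]
      exact hp
  rw [Nat.card_congr (Equiv.ofBijective toDyck ⟨hinj, hsurj⟩), Nat.card_eq_fintype_card,
    DyckWord.card_dyckWord_semilength_eq_catalan]

theorem card_filter_isRight (d : ℕ) (c : Bool) : #{s : Fin d ⊕ Fin d | s.isRight = c} = d := by
  cases c
  · simpa using (card_filter_inl (α := Fin d) (β := Fin d) fun _ => True).symm
  · simpa using (card_filter_inr (α := Fin d) (β := Fin d) fun _ => True).symm

theorem card_isRight_comp_eq {d : ℕ} {w : Fin (d + d) → Bool} (hw : #{k | w k = true} = d) :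
    Nat.card {e : Fin (d + d) ≃ Fin d ⊕ Fin d // Sum.isRight ∘ e = w} = d ! * d ! := by
  have hw' : ∀ c, #{k | w k = c} = d := by
    have := card_filter_true_add_card_filter_false w
    rintro (_ | _) <;> omega
  rw [Nat.card_eq_fintype_card, card_equiv_comp_eq fun c => ?_]
  · simp only [Fintype.card_subtype, Fintype.prod_bool, hw']
  · rw [Fintype.card_subtype, Fintype.card_subtype, hw', card_filter_isRight]

theorem card_ballot_orderings (d : ℕ) :
    Nat.card {e : Fin (d + d) ≃ Fin d ⊕ Fin d // Ballot (Sum.isRight ∘ e)} =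
      catalan d * (d ! * d !) := by
  classical
  have hword : ∀ e : Fin (d + d) ≃ Fin d ⊕ Fin d, #{k | (Sum.isRight ∘ e) k = true} = d :=
    fun e => (card_equiv e (by simp)).trans (card_filter_isRight d true)
  let byWord : {e : Fin (d + d) ≃ Fin d ⊕ Fin d // Ballot (Sum.isRight ∘ e)} ≃
      Σ w : {w : Fin (d + d) → Bool // Ballot w ∧ #{k | w k = true} = d},
        {e : Fin (d + d) ≃ Fin d ⊕ Fin d // Sum.isRight ∘ e = w.1} :=
    { toFun e := ⟨⟨_, e.2, hword e⟩, e.1, rfl⟩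
      invFun x := ⟨x.2.1, by rw [x.2.2]; exact x.1.2.1⟩
      left_inv _ := rfl
      right_inv x := Sigma.subtype_ext (Subtype.ext x.2.2) rfl }
  rw [Nat.card_congr byWord, Nat.card_sigma, sum_congr rfl fun w _ => card_isRight_comp_eq w.2.2,
    sum_const, card_univ, ← Nat.card_eq_fintype_card, card_ballot, smul_eq_mul]

end Counting

theorem succ_mul_catalan_mul_factorial_mul_factorial (d : ℕ) :
    (d + 1) * (catalan d * (d ! * d !)) = (d + d)! := by
  rw [← mul_assoc, succ_mul_catalan_eq_centralBinom, Nat.centralBinom_eq_two_mul_choose, two_mul,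
    ← mul_assoc, Nat.add_choose_mul_factorial_mul_factorial]

instance : IsProbabilityMeasure unif :=
  ⟨by simp [unif]⟩

instance : NullSingletonClass unif := by
  rw [unif]; infer_instance

instance (d : ℕ) : IsProbabilityMeasure (unifPi d) := by
  rw [unifPi]; infer_instance

theorem FT_eq (d : ℕ) (x : Fin d → ℝ) :
    FT d x = (unifPi d {y | ∀ i, sortVec y i ≤ x i}).toReal := by
  have hs : MeasurableSet {y : Fin d → ℝ | ∀ i, y i ≤ x i} := by
    simp only [Set.ofPred_forall]
    exact .iInter fun i => measurableSet_le (measurable_pi_apply i) measurable_const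
  rw [FT, Measure.map_apply measurable_sortVec hs]
  rfl

theorem measurableSet_setOf_sortVec_le (d : ℕ) :
    MeasurableSet
      {p : (Fin d → ℝ) × (Fin d → ℝ) | ∀ i, sortVec p.2 i ≤ sortVec p.1 i} := by
  simp only [Set.ofPred_forall]
  exact .iInter fun i => measurableSet_le (measurable_sortVec.comp measurable_snd).eval
    (measurable_sortVec.comp measurable_fst).eval

theorem integral_FT_sortVec (d : ℕ) :
    ∫ x, FT d (sortVec x) ∂(unifPi d) =
      ((unifPi d).prod (unifPi d) {p | ∀ i, sortVec p.2 i ≤ sortVec p.1 i}).toReal := by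
  have hA := measurableSet_setOf_sortVec_le d
  rw [Measure.prod_apply hA, ← integral_toReal (measurable_measure_prodMk_left hA).aemeasurable
    (ae_of_all _ fun x => measure_lt_top _ _)]
  simp only [FT_eq]
  rfl

theorem prod_setOf_sortVec_le (d : ℕ) :
    (unifPi d).prod (unifPi d) {p | ∀ i, sortVec p.2 i ≤ sortVec p.1 i} =
      catalan d * (d ! * d !) * ((d + d)! : ℝ≥0∞)⁻¹ := by
  refine ((measurePreserving_sumPiEquivProdPi fun _ : Fin d ⊕ Fin d => unif).measure_preimage
    (measurableSet_setOf_sortVec_le d).nullMeasurableSet).symm.trans ?_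
  rw [pi_eq_card_mul_inv_factorial unif (n := d + d) (by simp)
    (fun e => Ballot (Sum.isRight ∘ e)) fun e z hz => ?_, card_ballot_orderings]
  · norm_cast
  · exact forall_sortVec_inr_le_sortVec_inl_iff hz

theorem stmt7_general (d : ℕ) :
    ∫ x, FT d (sortVec x) ∂(unifPi d) = 1 / (d + 1) := by
  have hcount : ((d : ℝ) + 1) * (catalan d * (d ! * d !)) = (d + d)! := by
    exact_mod_cast succ_mul_catalan_mul_factorial_mul_factorial d
  have hcatalan : (catalan d : ℝ) ≠ 0 := fun h => by
    rw [h, zero_mul, mul_zero] at hcount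
    exact Nat.cast_ne_zero.2 (Nat.factorial_ne_zero _) hcount.symm
  rw [integral_FT_sortVec, prod_setOf_sortVec_le]
  simp only [ENNReal.toReal_mul, ENNReal.toReal_inv, ENNReal.toReal_natCast, ← hcount]
  field_simp

theorem stmt7 (d : ℕ) (hd : 0 < d) :
    ∫ x, FT d (sortVec x) ∂(unifPi d) = 1 / (d + 1) :=
  stmt7_general d
end
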